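/- arXiv:2305.10335 — 4 statements merged into one kernel-verified Lean document; each statement's English description precedes it below -/
import Mathlib

section
/- Let X be a square-integrable random vector with values in EuclideanSpace ℝ (Fin n), with mean vector μ = E[X] and covariance matrix C defined by C i j = E[(X i − μ i)·(X j − μ j)]. Then X − μ lies in the range of C (viewed as a submodule of EuclideanSpace ℝ (Fin n)) almost surely. -/
/-!
With `Y = X - μ`, the matrix `C` is the second-moment matrix of `Y`, so `⟪v, C v⟫ = E[⟪v, Y⟫²]`.
For `v ∈ ker C` the nonnegative variable `⟪v, Y⟫²` therefore has mean zero, i.e. `⟪v, Y⟫ = 0`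
almost surely. Since `ker C` has a finite basis, almost surely `Y` is orthogonal to all of
`ker C`, and `(ker C)ᗮ = range C` because `C` is symmetric.
-/

open MeasureTheory
open scoped RealInnerProductSpace InnerProductSpace

theorem EuclideanSpace.inner_sq_eq_sum_sum {ι : Type*} [Fintype ι] (v y : EuclideanSpace ℝ ι) :
    ⟪v, y⟫ ^ 2 = ∑ i, ∑ j, v i * v j * (y i * y j) := by
  simp only [PiLp.inner_apply, RCLike.inner_apply, conj_trivial, sq, Finset.sum_mul_sum]
  exact Finset.sum_congr rfl fun i _ => Finset.sum_congr rfl fun j _ => by ring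

theorem Matrix.inner_toEuclideanLin_eq_sum_sum {ι : Type*} [Fintype ι] [DecidableEq ι]
    (C : Matrix ι ι ℝ) (v : EuclideanSpace ℝ ι) :
    ⟪v, Matrix.toEuclideanLin C v⟫ = ∑ i, ∑ j, v i * v j * C i j := by
  simp only [PiLp.inner_apply, RCLike.inner_apply, conj_trivial, Matrix.toLpLin_apply,
    Matrix.mulVec, dotProduct, Finset.sum_mul]
  exact Finset.sum_congr rfl fun i _ => Finset.sum_congr rfl fun j _ => by ring

theorem LinearMap.IsSymmetric.range_eq_orthogonal_ker {𝕜 E : Type*} [RCLike 𝕜]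
    [NormedAddCommGroup E] [InnerProductSpace 𝕜 E] [FiniteDimensional 𝕜 E] {T : E →ₗ[𝕜] E}
    (hT : T.IsSymmetric) : LinearMap.range T = (LinearMap.ker T)ᗮ := by
  rw [← hT.orthogonal_range, Submodule.orthogonal_orthogonal]

theorem Submodule.ae_mem_orthogonal_of_ae_inner_eq_zero {Ω 𝕜 E : Type*} [MeasurableSpace Ω]
    {P : Measure Ω} [RCLike 𝕜] [NormedAddCommGroup E] [InnerProductSpace 𝕜 E]
    (K : Submodule 𝕜 E) [FiniteDimensional 𝕜 K] {Y : Ω → E}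
    (h : ∀ v ∈ K, ∀ᵐ ω ∂P, ⟪v, Y ω⟫_𝕜 = 0) : ∀ᵐ ω ∂P, Y ω ∈ Kᗮ := by
  let b := Module.finBasis 𝕜 K
  have hb : ∀ᵐ ω ∂P, ∀ i, ⟪(b i : E), Y ω⟫_𝕜 = 0 := ae_all_iff.2 fun i => h _ (b i).2
  filter_upwards [hb] with ω hω
  rw [Submodule.mem_orthogonal]
  intro u hu
  lift u to K using hu
  rw [← b.sum_repr u]
  simp only [Submodule.coe_sum, Submodule.coe_smul, sum_inner, inner_smul_left, hω, mul_zero,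
    Finset.sum_const_zero]

section

variable {Ω ι : Type*} [MeasurableSpace Ω] {P : Measure Ω} {Y : Ω → EuclideanSpace ℝ ι}
  {C : Matrix ι ι ℝ}

theorem Matrix.isHermitian_of_eq_integral_mul (hC : ∀ i j, C i j = ∫ ω, Y ω i * Y ω j ∂P) :
    C.IsHermitian := by
  ext i j
  simp only [Matrix.conjTranspose_apply, star_trivial, hC, mul_comm]

variable [Fintype ι]

theorem integrable_inner_sq (hY : ∀ i, MemLp (fun ω => Y ω i) 2 P) (v : EuclideanSpace ℝ ι) :
    Integrable (fun ω => ⟪v, Y ω⟫ ^ 2) P := by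
  simp only [EuclideanSpace.inner_sq_eq_sum_sum]
  exact integrable_finsetSum _ fun i _ => integrable_finsetSum _ fun j _ =>
    ((hY i).integrable_mul (hY j)).const_mul _

theorem Matrix.inner_toEuclideanLin_eq_integral_inner_sq [DecidableEq ι]
    (hY : ∀ i, MemLp (fun ω => Y ω i) 2 P) (hC : ∀ i j, C i j = ∫ ω, Y ω i * Y ω j ∂P)
    (v : EuclideanSpace ℝ ι) :
    ⟪v, Matrix.toEuclideanLin C v⟫ = ∫ ω, ⟪v, Y ω⟫ ^ 2 ∂P := by
  have hint : ∀ i j, Integrable (fun ω => v i * v j * (Y ω i * Y ω j)) P := fun i j =>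
    ((hY i).integrable_mul (hY j)).const_mul _
  simp only [Matrix.inner_toEuclideanLin_eq_sum_sum, EuclideanSpace.inner_sq_eq_sum_sum,
    integral_finsetSum _ fun i _ => integrable_finsetSum _ fun j _ => hint i j,
    integral_finsetSum _ fun j _ => hint _ j, integral_const_mul, hC]

theorem Matrix.ae_inner_eq_zero_of_mem_ker_toEuclideanLin [DecidableEq ι]
    (hY : ∀ i, MemLp (fun ω => Y ω i) 2 P) (hC : ∀ i j, C i j = ∫ ω, Y ω i * Y ω j ∂P)
    {v : EuclideanSpace ℝ ι} (hv : v ∈ LinearMap.ker (Matrix.toEuclideanLin C)) :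
    ∀ᵐ ω ∂P, ⟪v, Y ω⟫ = 0 := by
  have hsq : (fun ω => ⟪v, Y ω⟫ ^ 2) =ᵐ[P] 0 := by
    rw [← integral_eq_zero_iff_of_nonneg (fun ω => sq_nonneg _) (integrable_inner_sq hY v),
      ← inner_toEuclideanLin_eq_integral_inner_sq hY hC, LinearMap.mem_ker.mp hv,
      inner_zero_right]
  filter_upwards [hsq] with ω hω
  exact pow_eq_zero_iff two_ne_zero |>.mp hω

end

theorem ae_mem_range_covariance_general
    {Ω : Type*} [MeasurableSpace Ω] {n : ℕ}
    (P : Measure Ω) [IsProbabilityMeasure P]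
    (X : Ω → EuclideanSpace ℝ (Fin n))
    (hX2 : ∀ i, MemLp (fun ω => X ω i) 2 P)
    (μ : EuclideanSpace ℝ (Fin n))
    (C : Matrix (Fin n) (Fin n) ℝ)
    (hC : ∀ i j, C i j = ∫ ω, (X ω i - μ i) * (X ω j - μ j) ∂P) :
    ∀ᵐ ω ∂P, X ω - μ ∈ LinearMap.range (Matrix.toEuclideanLin C) := by
  have hY : ∀ i, MemLp (fun ω => (X ω - μ) i) 2 P := fun i => (hX2 i).sub (memLp_const (μ i))
  have hT : (Matrix.toEuclideanLin C).IsSymmetric := Matrix.isSymmetric_toEuclideanLin_iff.mpr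
    (Matrix.isHermitian_of_eq_integral_mul (Y := fun ω => X ω - μ) hC)
  rw [hT.range_eq_orthogonal_ker]
  exact Submodule.ae_mem_orthogonal_of_ae_inner_eq_zero _ fun v hv =>
    Matrix.ae_inner_eq_zero_of_mem_ker_toEuclideanLin (Y := fun ω => X ω - μ) hY hC hv

theorem ae_mem_range_covariance
    {Ω : Type*} [MeasurableSpace Ω] {n : ℕ}
    (P : Measure Ω) [IsProbabilityMeasure P]
    (X : Ω → EuclideanSpace ℝ (Fin n)) (hXm : Measurable X)
    (hX2 : ∀ i, MemLp (fun ω => X ω i) 2 P)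
    (μ : EuclideanSpace ℝ (Fin n)) (hμ : ∀ i, μ i = ∫ ω, X ω i ∂P)
    (C : Matrix (Fin n) (Fin n) ℝ)
    (hC : ∀ i j, C i j = ∫ ω, (X ω i - μ i) * (X ω j - μ j) ∂P) :
    ∀ᵐ ω ∂P, X ω - μ ∈ LinearMap.range (Matrix.toEuclideanLin C) :=
  ae_mem_range_covariance_general P X hX2 μ C hC
end

section
/- Let X be a square-integrable random vector with values in EuclideanSpace ℝ (Fin n), with mean vector μ = E[X] and covariance matrix C defined by C i j = E[(X i − μ i)·(X j − μ j)]. If W is any subspace of EuclideanSpace ℝ (Fin n) such that X − μ ∈ W almost surely, then the range of C (as a linear map) is contained in W. Consequently, the range of C is the smallest subspace containing X − μ almost surely. -/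
/-!
With `Y = X - μ`, the matrix `C` is the second-moment operator of `Y`:
`⟪w, C v⟫ = E[⟪w, Y⟫ ⟪v, Y⟫]`. If `Y ∈ W` almost surely, every `w ⊥ W` annihilates `C v`, so
`range C ≤ Wᗮᗮ = W`. Conversely, if `u ⊥ range C` then `E[⟪u, Y⟫²] = ⟪u, C u⟫ = 0`, so
`⟪u, Y⟫ = 0` almost surely; testing against a finite spanning set of `(range C)ᗮ` puts `Y` in
`range C` almost surely.
-/

open MeasureTheory
open scoped RealInnerProductSpace

section OrthogonalComplement

variable {Ω 𝕜 E : Type*} [MeasurableSpace Ω] [RCLike 𝕜] [NormedAddCommGroup E]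
  [InnerProductSpace 𝕜 E] [FiniteDimensional 𝕜 E] {P : Measure Ω} {Y : Ω → E}

theorem Submodule.ae_mem_of_forall_mem_orthogonal {K : Submodule 𝕜 E}
    (h : ∀ u ∈ Kᗮ, ∀ᵐ ω ∂P, inner 𝕜 u (Y ω) = 0) : ∀ᵐ ω ∂P, Y ω ∈ K := by
  obtain ⟨S, hS⟩ := IsNoetherian.noetherian Kᗮ
  have hS_ae : ∀ᵐ ω ∂P, ∀ u ∈ S, inner 𝕜 u (Y ω) = 0 :=
    (Filter.eventually_all_finset S).2 fun u hu => h u (hS ▸ Submodule.subset_span hu)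
  filter_upwards [hS_ae] with ω hω
  rw [← Submodule.span_singleton_le_iff_mem, ← Submodule.orthogonal_le_orthogonal_iff, ← hS,
    Submodule.span_le]
  exact fun u hu => Submodule.mem_orthogonal_singleton_iff_inner_left.2 (hω u hu)

end OrthogonalComplement

section SecondMomentOperator

variable {Ω E : Type*} [MeasurableSpace Ω] [NormedAddCommGroup E] [InnerProductSpace ℝ E]

def LinearMap.IsSecondMomentOperator (T : E →ₗ[ℝ] E) (P : Measure Ω) (Y : Ω → E) : Prop :=
  ∀ v w, ⟪w, T v⟫ = ∫ ω, ⟪w, Y ω⟫ * ⟪v, Y ω⟫ ∂P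

variable [FiniteDimensional ℝ E] {P : Measure Ω} {Y : Ω → E} {T : E →ₗ[ℝ] E}

theorem LinearMap.IsSecondMomentOperator.range_le_of_ae_mem (hT : T.IsSecondMomentOperator P Y)
    {W : Submodule ℝ E} (hW : ∀ᵐ ω ∂P, Y ω ∈ W) : LinearMap.range T ≤ W := by
  rw [← W.orthogonal_orthogonal]
  rintro _ ⟨v, rfl⟩ w hw
  rw [hT v w, integral_eq_zero_of_ae]
  filter_upwards [hW] with ω hω
  simp [Submodule.inner_left_of_mem_orthogonal hω hw]

theorem LinearMap.IsSecondMomentOperator.ae_mem_range (hT : T.IsSecondMomentOperator P Y)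
    (hY : ∀ u, MemLp (fun ω => ⟪u, Y ω⟫) 2 P) : ∀ᵐ ω ∂P, Y ω ∈ LinearMap.range T := by
  refine Submodule.ae_mem_of_forall_mem_orthogonal fun u hu => ?_
  have hmoment : ∫ ω, ⟪u, Y ω⟫ * ⟪u, Y ω⟫ ∂P = 0 := by
    rw [← hT u u, real_inner_comm]
    exact hu _ ⟨u, rfl⟩
  rw [integral_eq_zero_iff_of_nonneg_ae (.of_forall fun ω => mul_self_nonneg _)
    ((hY u).integrable_mul (hY u))] at hmoment
  filter_upwards [hmoment] with ω hω
  exact mul_self_eq_zero.1 hω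

end SecondMomentOperator

section Coordinates

variable {Ω ι : Type*} [MeasurableSpace Ω] [Fintype ι] {P : Measure Ω}
  {Y : Ω → EuclideanSpace ℝ ι}

theorem EuclideanSpace.memLp_inner (hY : ∀ i, MemLp (fun ω => Y ω i) 2 P)
    (u : EuclideanSpace ℝ ι) : MemLp (fun ω => ⟪u, Y ω⟫) 2 P := by
  simp only [PiLp.inner_apply, RCLike.inner_apply, conj_trivial]
  exact memLp_finsetSum _ fun i _ => (hY i).mul_const _

theorem Matrix.isSecondMomentOperator_toEuclideanLin [DecidableEq ι]
    (hY : ∀ i, MemLp (fun ω => Y ω i) 2 P) {C : Matrix ι ι ℝ}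
    (hC : ∀ i j, C i j = ∫ ω, Y ω i * Y ω j ∂P) :
    (Matrix.toEuclideanLin C).IsSecondMomentOperator P Y := by
  intro v w
  have hYY : ∀ i j, Integrable (fun ω => Y ω i * Y ω j) P := fun i j =>
    (hY i).integrable_mul (hY j)
  calc ⟪w, Matrix.toEuclideanLin C v⟫ = ∑ i, ∑ j, w i * v j * C i j := by
        simp only [PiLp.inner_apply, RCLike.inner_apply, conj_trivial, Matrix.ofLp_toLpLin,
          Matrix.toLin'_apply, Matrix.mulVec, dotProduct, Finset.sum_mul]
        exact Finset.sum_congr rfl fun i _ => Finset.sum_congr rfl fun j _ => by ring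
    _ = ∫ ω, ∑ i, ∑ j, w i * v j * (Y ω i * Y ω j) ∂P := by
        rw [integral_finsetSum _ fun i _ => integrable_finsetSum _ fun j _ =>
          (hYY i j).const_mul _]
        refine Finset.sum_congr rfl fun i _ => ?_
        rw [integral_finsetSum _ fun j _ => (hYY i j).const_mul _]
        simp_rw [integral_const_mul, hC]
    _ = ∫ ω, ⟪w, Y ω⟫ * ⟪v, Y ω⟫ ∂P := by
        simp only [PiLp.inner_apply, RCLike.inner_apply, conj_trivial, Finset.sum_mul_sum]
        exact integral_congr_ae (.of_forall fun ω => Finset.sum_congr rfl fun i _ =>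
          Finset.sum_congr rfl fun j _ => by ring)

end Coordinates

theorem range_covariance_isLeast_general
    {Ω : Type*} [MeasurableSpace Ω] {n : ℕ}
    (P : Measure Ω) [IsProbabilityMeasure P]
    (X : Ω → EuclideanSpace ℝ (Fin n))
    (hX2 : ∀ i, MemLp (fun ω => X ω i) 2 P)
    (μ : EuclideanSpace ℝ (Fin n))
    (C : Matrix (Fin n) (Fin n) ℝ)
    (hC : ∀ i j, C i j = ∫ ω, (X ω i - μ i) * (X ω j - μ j) ∂P) :
    (∀ W : Submodule ℝ (EuclideanSpace ℝ (Fin n)),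
        (∀ᵐ ω ∂P, X ω - μ ∈ W) → LinearMap.range (Matrix.toEuclideanLin C) ≤ W) ∧
      IsLeast {W : Submodule ℝ (EuclideanSpace ℝ (Fin n)) | ∀ᵐ ω ∂P, X ω - μ ∈ W}
        (LinearMap.range (Matrix.toEuclideanLin C)) := by
  have hY : ∀ i, MemLp (fun ω => (X ω - μ) i) 2 P := fun i => (hX2 i).sub (memLp_const (μ i))
  have hT := Matrix.isSecondMomentOperator_toEuclideanLin hY (C := C) (by simpa using hC)
  have hle W (hW : ∀ᵐ ω ∂P, X ω - μ ∈ W) := hT.range_le_of_ae_mem hW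
  exact ⟨hle, hT.ae_mem_range (EuclideanSpace.memLp_inner hY), hle⟩

theorem range_covariance_isLeast
    {Ω : Type*} [MeasurableSpace Ω] {n : ℕ}
    (P : Measure Ω) [IsProbabilityMeasure P]
    (X : Ω → EuclideanSpace ℝ (Fin n)) (hXm : Measurable X)
    (hX2 : ∀ i, MemLp (fun ω => X ω i) 2 P)
    (μ : EuclideanSpace ℝ (Fin n)) (hμ : ∀ i, μ i = ∫ ω, X ω i ∂P)
    (C : Matrix (Fin n) (Fin n) ℝ)
    (hC : ∀ i j, C i j = ∫ ω, (X ω i - μ i) * (X ω j - μ j) ∂P) :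
    (∀ W : Submodule ℝ (EuclideanSpace ℝ (Fin n)),
        (∀ᵐ ω ∂P, X ω - μ ∈ W) → LinearMap.range (Matrix.toEuclideanLin C) ≤ W) ∧
      IsLeast {W : Submodule ℝ (EuclideanSpace ℝ (Fin n)) | ∀ᵐ ω ∂P, X ω - μ ∈ W}
        (LinearMap.range (Matrix.toEuclideanLin C)) :=
  range_covariance_isLeast_general P X hX2 μ C hC
end

section
/- Let λ : Fin n → ℝ with 0 ≤ λ i for all i, and let m : Fin n → ℝ. Then there exists ε > 0 such that for all real t with |t| < ε, ∑_{i} ( t·(m i)²/(1 − 2t·λ i) − (1/2)·log(1 − 2t·λ i) ) = ∑_{j=1}^∞ (2^(j−1)/j)·( ∑_i (λ i)^j + j·∑_i (λ i)^(j−1)·(m i)² )·t^j, with the series on the right converging. -/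
lemma cgf_aux (lam m t : ℝ) (h : |2 * t * lam| < 1) :
    HasSum
      (fun k : ℕ => 2 ^ k / ((k : ℝ) + 1) *
        (lam ^ (k + 1) + ((k : ℝ) + 1) * (lam ^ k * m ^ 2)) * t ^ (k + 1))
      (t * m ^ 2 / (1 - 2 * t * lam) - (1 / 2) * Real.log (1 - 2 * t * lam)) := by
  have hA : HasSum (fun k : ℕ => t * m ^ 2 * (2 * t * lam) ^ k)
      (t * m ^ 2 * (1 - 2 * t * lam)⁻¹) :=
    (hasSum_geometric_of_abs_lt_one h).mul_left _
  have hB : HasSum (fun k : ℕ => (1 / 2) * ((2 * t * lam) ^ (k + 1) / ((k : ℝ) + 1)))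
      ((1 / 2) * (-Real.log (1 - 2 * t * lam))) :=
    (Real.hasSum_pow_div_log_of_abs_lt_one h).mul_left _
  have := hB.add hA
  convert this using 1
  · funext k
    have hk : ((k : ℝ) + 1) ≠ 0 := by positivity
    field_simp
    ring
  · rw [div_eq_mul_inv]
    ring

theorem cgf_expansion_eigen {n : ℕ} (lam m : Fin n → ℝ) (hlam : ∀ i, 0 ≤ lam i) :
    ∃ ε > (0 : ℝ), ∀ t : ℝ, |t| < ε →
      HasSum
        (fun k : ℕ =>
          2 ^ k / ((k : ℝ) + 1) *
            (∑ i, lam i ^ (k + 1) + ((k : ℝ) + 1) * ∑ i, lam i ^ k * m i ^ 2) *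
            t ^ (k + 1))
        (∑ i, (t * m i ^ 2 / (1 - 2 * t * lam i) -
          (1 / 2) * Real.log (1 - 2 * t * lam i))) := by
  set S := ∑ i, lam i with hS
  have hS0 : 0 ≤ S := Finset.sum_nonneg fun i _ => hlam i
  have hpos : (0 : ℝ) < 1 + 2 * S := by linarith
  refine ⟨1 / (1 + 2 * S), by positivity, fun t ht => ?_⟩
  have ht1 : |t| * (1 + 2 * S) < 1 := (lt_div_iff₀ hpos).mp ht
  have key : ∀ i : Fin n, |2 * t * lam i| < 1 := by
    intro i
    have hle : lam i ≤ S := Finset.single_le_sum (fun j _ => hlam j) (Finset.mem_univ i)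
    have : |2 * t * lam i| = 2 * |t| * lam i := by
      rw [abs_mul, abs_mul, abs_of_nonneg (hlam i)]
      norm_num
    rw [this]
    nlinarith [abs_nonneg t, hlam i]
  have := hasSum_sum (f := fun (i : Fin n) (k : ℕ) =>
      2 ^ k / ((k : ℝ) + 1) *
        (lam i ^ (k + 1) + ((k : ℝ) + 1) * (lam i ^ k * m i ^ 2)) * t ^ (k + 1))
    (s := Finset.univ)
    (fun i _ => cgf_aux (lam i) (m i) t (key i))
  convert this using 1
  funext k
  simp only [mul_add, add_mul, Finset.mul_sum, Finset.sum_mul, ← Finset.sum_add_distrib]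
end

section
/- Let λ : Fin n → ℝ with 0 ≤ λ i for all i, let m : Fin n → ℝ, and let r and ν be real numbers. Suppose that for every natural number j ≥ 1, r/j + ν² = ∑_i (λ i)^(j−1)·(λ i / j + (m i)²). Then: (a) every λ i equals 0 or 1; (b) m i = 0 whenever λ i = 0; (c) ν² = ∑_{i : λ i = 1} (m i)²; and (d) r equals the number of indices i with λ i = 1. -/
open scoped Classical

open Filter Topology

theorem eigen_of_cumulant_eq {n : ℕ} (lam m : Fin n → ℝ) (hlam : ∀ i, 0 ≤ lam i)
    (r ν : ℝ)
    (h : ∀ j : ℕ, 1 ≤ j →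
      r / (j : ℝ) + ν ^ 2 = ∑ i, lam i ^ (j - 1) * (lam i / (j : ℝ) + m i ^ 2)) :
    (∀ i, lam i = 0 ∨ lam i = 1) ∧
    (∀ i, lam i = 0 → m i = 0) ∧
    ν ^ 2 = ∑ i ∈ Finset.univ.filter (fun i => lam i = 1), m i ^ 2 ∧
    r = ((Finset.univ.filter (fun i : Fin n => lam i = 1)).card : ℝ) := by
  -- multiplied-by-j form of the hypothesis
  have hE : ∀ k : ℕ, r + ((k : ℝ) + 1) * ν ^ 2 =
      ∑ i, (lam i ^ (k + 1) + ((k : ℝ) + 1) * lam i ^ k * m i ^ 2) := by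
    intro k
    have h1 := h (k + 1) (by omega)
    have hk0 : ((k : ℝ) + 1) ≠ 0 := by positivity
    have hcast : (((k + 1 : ℕ)) : ℝ) = (k : ℝ) + 1 := by push_cast; ring
    rw [hcast] at h1
    have hh := congrArg (fun x => ((k : ℝ) + 1) * x) h1
    simp only [Nat.add_sub_cancel, Finset.mul_sum] at hh
    calc r + ((k : ℝ) + 1) * ν ^ 2
        = ((k : ℝ) + 1) * (r / ((k : ℝ) + 1) + ν ^ 2) := by field_simp
      _ = ∑ i, ((k : ℝ) + 1) * (lam i ^ k * (lam i / ((k : ℝ) + 1) + m i ^ 2)) := hh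
      _ = ∑ i, (lam i ^ (k + 1) + ((k : ℝ) + 1) * lam i ^ k * m i ^ 2) := by
          refine Finset.sum_congr rfl fun i _ => ?_
          field_simp
          ring
  -- every eigenvalue is at most 1
  have hle : ∀ i, lam i ≤ 1 := by
    intro i0
    by_contra hgt
    push_neg at hgt
    have hpos : 0 < lam i0 := lt_trans one_pos hgt
    have hbound : ∀ k : ℕ, lam i0 ^ (k + 1) ≤ r + ((k : ℝ) + 1) * ν ^ 2 := by
      intro k
      rw [hE k]
      have hterm : lam i0 ^ (k + 1) ≤ lam i0 ^ (k + 1) + ((k : ℝ) + 1) * lam i0 ^ k * m i0 ^ 2 :=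
        le_add_of_nonneg_right (by positivity)
      have hsum := Finset.single_le_sum
        (f := fun i => lam i ^ (k + 1) + ((k : ℝ) + 1) * lam i ^ k * m i ^ 2)
        (fun i _ => by have := hlam i; positivity) (Finset.mem_univ i0)
      exact hterm.trans hsum
    set q := (lam i0)⁻¹ with hq
    have hq0 : 0 ≤ q := by positivity
    have hq1 : q < 1 := by
      rw [hq, inv_lt_one_iff₀]; right; exact hgt
    have t1 : Tendsto (fun k : ℕ => q ^ (k + 1)) atTop (𝓝 0) :=
      (tendsto_pow_atTop_nhds_zero_of_lt_one hq0 hq1).comp (tendsto_add_atTop_nat 1)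
    have t2 : Tendsto (fun k : ℕ => ((k : ℝ) + 1) * q ^ (k + 1)) atTop (𝓝 0) := by
      have h3 := (tendsto_self_mul_const_pow_of_lt_one hq0 hq1).comp (tendsto_add_atTop_nat 1)
      refine h3.congr fun k => ?_
      simp only [Function.comp]
      push_cast
      ring
    have htend : Tendsto (fun k : ℕ => (r + ((k : ℝ) + 1) * ν ^ 2) * q ^ (k + 1)) atTop (𝓝 0) := by
      have h4 := (t1.const_mul r).add (t2.const_mul (ν ^ 2))
      simp only [mul_zero, add_zero] at h4
      refine h4.congr fun k => ?_
      ring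
    have hge : ∀ k : ℕ, (1 : ℝ) ≤ (r + ((k : ℝ) + 1) * ν ^ 2) * q ^ (k + 1) := by
      intro k
      have hb := hbound k
      have hqp : q ^ (k + 1) = (lam i0 ^ (k + 1))⁻¹ := by rw [hq, inv_pow]
      rw [hqp, ← div_eq_mul_inv, le_div_iff₀ (by positivity)]
      linarith
    have : (1 : ℝ) ≤ 0 := ge_of_tendsto htend (Eventually.of_forall hge)
    linarith
  set P := Finset.univ.filter (fun i : Fin n => lam i = 1) with hP
  set Q := Finset.univ.filter (fun i : Fin n => ¬ lam i = 1) with hQ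
  set c := (P.card : ℝ) with hc
  set S := ∑ i ∈ P, m i ^ 2 with hS
  have hQlt : ∀ i ∈ Q, lam i < 1 := by
    intro i hi
    rw [hQ, Finset.mem_filter] at hi
    exact lt_of_le_of_ne (hle i) hi.2
  -- decomposition
  have hsplit : ∀ k : ℕ, r + ((k : ℝ) + 1) * ν ^ 2 =
      c + ((k : ℝ) + 1) * S +
      ∑ i ∈ Q, (lam i ^ (k + 1) + ((k : ℝ) + 1) * lam i ^ k * m i ^ 2) := by
    intro k
    rw [hE k, ← Finset.sum_filter_add_sum_filter_not Finset.univ (fun i => lam i = 1),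
      ← hP, ← hQ]
    congr 1
    calc ∑ i ∈ P, (lam i ^ (k + 1) + ((k : ℝ) + 1) * lam i ^ k * m i ^ 2)
        = ∑ i ∈ P, (1 + ((k : ℝ) + 1) * m i ^ 2) := by
          refine Finset.sum_congr rfl fun i hi => ?_
          have : lam i = 1 := by
            rw [hP, Finset.mem_filter] at hi; exact hi.2
          rw [this]; simp
      _ = c + ((k : ℝ) + 1) * S := by
          rw [Finset.sum_add_distrib, Finset.sum_const, nsmul_eq_mul, mul_one, hS,
            Finset.mul_sum, hc]
  -- the tail tends to 0
  set T : ℕ → ℝ := fun k => ∑ i ∈ Q, (lam i ^ (k + 1) + ((k : ℝ) + 1) * lam i ^ k * m i ^ 2)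
    with hT
  have hTtend : Tendsto T atTop (𝓝 0) := by
    have : Tendsto T atTop (𝓝 (∑ i ∈ Q, (0 : ℝ))) := by
      refine tendsto_finset_sum _ fun i hi => ?_
      have h0 : 0 ≤ lam i := hlam i
      have h1 : lam i < 1 := hQlt i hi
      have ta : Tendsto (fun k : ℕ => lam i ^ (k + 1)) atTop (𝓝 0) :=
        (tendsto_pow_atTop_nhds_zero_of_lt_one h0 h1).comp (tendsto_add_atTop_nat 1)
      have tb : Tendsto (fun k : ℕ => ((k : ℝ) + 1) * lam i ^ k * m i ^ 2) atTop (𝓝 0) := by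
        have tb1 : Tendsto (fun k : ℕ => (k : ℝ) * lam i ^ k) atTop (𝓝 0) :=
          tendsto_self_mul_const_pow_of_lt_one h0 h1
        have tb2 : Tendsto (fun k : ℕ => lam i ^ k) atTop (𝓝 0) :=
          tendsto_pow_atTop_nhds_zero_of_lt_one h0 h1
        have h5 := ((tb1.add tb2).mul_const (m i ^ 2))
        simp only [add_zero, zero_mul] at h5
        refine h5.congr fun k => ?_
        ring
      have h6 := ta.add tb
      simpa using h6
    simpa using this
  -- T is an affine function of k
  have hTaff : ∀ k : ℕ, T k = (r - c) + ((k : ℝ) + 1) * (ν ^ 2 - S) := by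
    intro k
    have h1 := hsplit k
    change (∑ i ∈ Q, (lam i ^ (k + 1) + ((k : ℝ) + 1) * lam i ^ k * m i ^ 2)) = _
    have h2 : ((k : ℝ) + 1) * (ν ^ 2 - S) = ((k : ℝ) + 1) * ν ^ 2 - ((k : ℝ) + 1) * S := by ring
    rw [h2]
    linarith
  -- difference trick : ν² = S
  have hνS : ν ^ 2 = S := by
    have hd : Tendsto (fun k : ℕ => T (k + 1) - T k) atTop (𝓝 0) := by
      have := (hTtend.comp (tendsto_add_atTop_nat 1)).sub hTtend
      simpa using this
    have hconst : ∀ k : ℕ, T (k + 1) - T k = ν ^ 2 - S := by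
      intro k
      rw [hTaff k, hTaff (k + 1)]
      push_cast
      ring
    have : Tendsto (fun _ : ℕ => ν ^ 2 - S) atTop (𝓝 0) :=
      hd.congr hconst
    have h0 := tendsto_nhds_unique this tendsto_const_nhds
    linarith
  have hrc : r = c := by
    have hconst : ∀ k : ℕ, T k = r - c := by
      intro k; rw [hTaff k, hνS]; ring
    have : Tendsto (fun _ : ℕ => r - c) atTop (𝓝 0) := hTtend.congr hconst
    have h0 := tendsto_nhds_unique this tendsto_const_nhds
    linarith
  -- j = 1 equation gives the rest
  have hQzero : ∀ i ∈ Q, lam i = 0 ∧ m i = 0 := by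
    have h1 := hsplit 0
    rw [hrc, hνS] at h1
    simp only [Nat.cast_zero, zero_add, one_mul, pow_zero, pow_one] at h1
    have hzero : ∑ i ∈ Q, (lam i + m i ^ 2) = 0 := by linarith
    have hall := (Finset.sum_eq_zero_iff_of_nonneg
      (fun i _ => by have := hlam i; positivity)).mp hzero
    intro i hi
    have := hall i hi
    have hl : lam i = 0 := by nlinarith [hlam i, sq_nonneg (m i)]
    have hm : m i = 0 := by nlinarith [hlam i, sq_nonneg (m i)]
    exact ⟨hl, hm⟩
  have hmemQ : ∀ i, lam i ≠ 1 → i ∈ Q := by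
    intro i hi
    rw [hQ, Finset.mem_filter]
    exact ⟨Finset.mem_univ i, hi⟩
  refine ⟨?_, ?_, hνS, hrc⟩
  · intro i
    by_cases h1 : lam i = 1
    · exact Or.inr h1
    · exact Or.inl (hQzero i (hmemQ i h1)).1
  · intro i hi0
    have h1 : lam i ≠ 1 := by rw [hi0]; norm_num
    exact (hQzero i (hmemQ i h1)).2
end
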